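/- Let R be a commutative ring and let Y, λ ∈ R satisfy λ⁴ − (16Y + 1)·λ³ − 16Y·λ² + (512Y³ − 64Y²)·λ + 1024Y⁴ = 0. Define the vector u ∈ R⁴ by u₁ = −2(λ³ − 24λ²Y + 96λY² + 512Y³ − λ² − 8λY), u₂ = λ³ − 24λ²Y + 192λY² + 512Y³ − λ² − 8λY, u₃ = 384Y³, u₄ = 2Y(λ³ − 12λ²Y + 128Y³ − λ² − 20λY − 96Y²). Then M(Y)·u = λ·u, i.e., u is an eigenvector of M(Y) with eigenvalue λ. -/
import Mathlib


open Matrix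

/-- The reduced transfer matrix for the genus distribution of doubly hexagonal chains,
over an arbitrary commutative ring, as a function of the parameter `Y`. -/
def Mmat {R : Type*} [CommRing R] (Y : R) : Matrix (Fin 4) (Fin 4) R :=
  !![1, 2, 4, 8;
     8*Y, 8*Y, 8*Y, 0;
     2*Y, 4*Y, 0, 0;
     4*Y^2 + Y, 2*Y, 4*Y, 8*Y]

theorem eigenvector_of_root {R : Type*} [CommRing R] (Y lam : R)
    (h : lam ^ 4 - (16 * Y + 1) * lam ^ 3 - 16 * Y * lam ^ 2
          + (512 * Y ^ 3 - 64 * Y ^ 2) * lam + 1024 * Y ^ 4 = 0) :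
    (Mmat Y).mulVec
      ![-2 * (lam ^ 3 - 24 * lam ^ 2 * Y + 96 * lam * Y ^ 2 + 512 * Y ^ 3
            - lam ^ 2 - 8 * lam * Y),
        lam ^ 3 - 24 * lam ^ 2 * Y + 192 * lam * Y ^ 2 + 512 * Y ^ 3
            - lam ^ 2 - 8 * lam * Y,
        384 * Y ^ 3,
        2 * Y * (lam ^ 3 - 12 * lam ^ 2 * Y + 128 * Y ^ 3
            - lam ^ 2 - 20 * lam * Y - 96 * Y ^ 2)] =
    lam • ![-2 * (lam ^ 3 - 24 * lam ^ 2 * Y + 96 * lam * Y ^ 2 + 512 * Y ^ 3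
            - lam ^ 2 - 8 * lam * Y),
        lam ^ 3 - 24 * lam ^ 2 * Y + 192 * lam * Y ^ 2 + 512 * Y ^ 3
            - lam ^ 2 - 8 * lam * Y,
        384 * Y ^ 3,
        2 * Y * (lam ^ 3 - 12 * lam ^ 2 * Y + 128 * Y ^ 3
            - lam ^ 2 - 20 * lam * Y - 96 * Y ^ 2)] := by
  funext i
  fin_cases i <;>
    simp [Mmat, mulVec, dotProduct, Fin.sum_univ_four]
  · linear_combination 2 * h
  · linear_combination -h
  · ring
  · linear_combination (-2 * Y) * h
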